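/- arXiv:2402.10676 — 2 statements merged into one kernel-verified Lean document; each statement's English description precedes it below -/
import Mathlib

section
/- Every lopsp-operation is 2-connected as a map. -/
/-- The orbit equivalence relation of a permutation: `x ~ y` iff some power of `f` maps `x` to `y`. -/
def permOrbit {D : Type} (f : Equiv.Perm D) : Setoid D where
  r x y := ∃ n : ℤ, (f ^ n) x = y
  iseqv := by
    refine ⟨fun x => ⟨0, by simp⟩, ?_, ?_⟩
    · rintro x y ⟨n, rfl⟩
      exact ⟨-n, by simp [← Equiv.Perm.mul_apply, ← zpow_add]⟩
    · rintro x y z ⟨m, rfl⟩ ⟨n, rfl⟩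
      exact ⟨n + m, by simp [← Equiv.Perm.mul_apply, ← zpow_add]⟩

/-- A combinatorial map: a set `D` of darts (directed edges), a rotation `σ` giving the
cyclic order of darts around each vertex, and a fixed-point-free involution `θ`
matching each dart with its reverse. -/
structure CombMap (D : Type) where
  σ : Equiv.Perm D
  θ : Equiv.Perm D
  θ_invol : ∀ d, θ (θ d) = d
  θ_fixfree : ∀ d, θ d ≠ d

namespace CombMap

variable {D D' : Type} (M : CombMap D)

/-- Vertices are the orbits of `σ`. -/
def Vertices : Type := Quotient (permOrbit M.σ)
/-- Edges are the orbits of `θ`. -/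
def Edges : Type := Quotient (permOrbit M.θ)
/-- The face permutation `d ↦ θ (σ d)`. -/
def facePerm : Equiv.Perm D := M.σ.trans M.θ
/-- Faces are the orbits of the face permutation. -/
def Faces : Type := Quotient (permOrbit M.facePerm)

def vertexOf (d : D) : M.Vertices := Quotient.mk _ d
def edgeOf (d : D) : M.Edges := Quotient.mk _ d
def faceOf (d : D) : M.Faces := Quotient.mk _ d

noncomputable def nV : ℕ := Nat.card M.Vertices
noncomputable def nE : ℕ := Nat.card M.Edges
noncomputable def nF : ℕ := Nat.card M.Faces

/-- The degree of a vertex: the number of darts emanating from it. -/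
noncomputable def degree (v : M.Vertices) : ℕ := Nat.card {d : D // M.vertexOf d = v}
/-- The size of a face: the number of darts in its facial walk. -/
noncomputable def faceSize (f : M.Faces) : ℕ := Nat.card {d : D // M.faceOf d = f}

/-- A map is connected if any dart can be reached from any other by `σ`- and `θ`-steps. -/
def IsConnected : Prop :=
  ∀ d d' : D, Relation.ReflTransGen (fun a b => M.σ a = b ∨ M.θ a = b) d d'

/-- Euler's formula for genus 0: `|V| + |F| = |E| + 2`. -/
def EulerPlane : Prop := M.nV + M.nF = M.nE + 2

/-- A plane map: a connected map of genus 0. -/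
def IsPlaneMap : Prop := M.IsConnected ∧ M.EulerPlane

def IsQuadrangulation : Prop := ∀ f : M.Faces, M.faceSize f = 4
def IsTriangulation : Prop := ∀ f : M.Faces, M.faceSize f = 3

/-- A dart is a loop if both of its ends are at the same vertex. -/
def IsLoop (d : D) : Prop := M.vertexOf d = M.vertexOf (M.θ d)

/-- Two darts are parallel if they belong to distinct edges with the same pair of endpoints. -/
def Parallel (d d' : D) : Prop :=
  M.edgeOf d ≠ M.edgeOf d' ∧ M.vertexOf d = M.vertexOf d' ∧
    M.vertexOf (M.θ d) = M.vertexOf (M.θ d')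

/-- A map is simple if it has no loops and no parallel edges. -/
def IsSimple : Prop := (∀ d, ¬ M.IsLoop d) ∧ ∀ d d', ¬ M.Parallel d d'

/-- A map is bipartite if its vertices can be 2-coloured with no monochromatic edge. -/
def IsBipartite : Prop :=
  ∃ c : M.Vertices → Bool, ∀ d : D, c (M.vertexOf d) ≠ c (M.vertexOf (M.θ d))

/-- Isomorphism of maps: a bijection of darts commuting with the rotation and the reversal. -/
def Iso (M' : CombMap D') : Prop :=
  ∃ e : D ≃ D', (∀ d, e (M.σ d) = M'.σ (e d)) ∧ (∀ d, e (M.θ d) = M'.θ (e d))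

end CombMap

/-- A lopsp-operation: a plane (connected, genus 0) triangulation with a proper
3-colouring of its vertices by `{0,1,2}`, three marked vertices `v₀, v₁, v₂` with
`c v₀, c v₂ ≠ 1`, `deg v₁ = 2` if `c v₁ = 1`, and every other colour-1 vertex of degree 4. -/
structure Lopsp (D : Type) extends CombMap D where
  conn : toCombMap.IsConnected
  euler : toCombMap.EulerPlane
  tri : toCombMap.IsTriangulation
  col : toCombMap.Vertices → Fin 3
  proper : ∀ d : D, col (toCombMap.vertexOf d) ≠ col (toCombMap.vertexOf (θ d))
  v0 : toCombMap.Vertices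
  v1 : toCombMap.Vertices
  v2 : toCombMap.Vertices
  hv0 : col v0 ≠ 1
  hv2 : col v2 ≠ 1
  hv1 : col v1 = 1 → toCombMap.degree v1 = 2
  hdeg : ∀ v, col v = 1 → v ≠ v1 → toCombMap.degree v = 4

namespace Lopsp

variable {D : Type} (O : Lopsp D)

/-- The underlying combinatorial map of a lopsp-operation. -/
abbrev M : CombMap D := O.toCombMap

end Lopsp

namespace CombMap

/-- The map stays connected after removing a vertex `v`: any two darts not at `v` are joined
by a sequence of `σ`- and `θ`-steps through darts not at `v`. -/
def ConnectedAvoiding {D : Type} (M : CombMap D) (v : M.Vertices) : Prop :=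
  ∀ d d' : D, M.vertexOf d ≠ v → M.vertexOf d' ≠ v →
    Relation.ReflTransGen
      (fun a b => M.vertexOf a ≠ v ∧ M.vertexOf b ≠ v ∧ (M.σ a = b ∨ M.θ a = b)) d d'

/-- A map is 2-connected if it has no loops and no cut vertex. -/
def TwoConnected {D : Type} (M : CombMap D) : Prop :=
  (∀ d, ¬ M.IsLoop d) ∧ ∀ v : M.Vertices, M.ConnectedAvoiding v

end CombMap

/-! A proper colouring rules out loops. To see that no vertex `v` is a cut vertex, take a walk
in the whole map and replace every dart at `v` by its reverse, which avoids `v` since there are no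
loops. A `θ`-step then becomes trivial, and a turn from `a` to `σ a` around `v` is replaced by a
walk from the far end of `a` to the far end of `σ a` along the third side of the triangle
spanned by `a` and `σ a`. -/

open Equiv Function Relation

section permOrbit

variable {D : Type}

theorem permOrbit_mk_zpow_apply (f : Perm D) (n : ℤ) (x : D) :
    Quotient.mk (permOrbit f) ((f ^ n) x) = Quotient.mk (permOrbit f) x :=
  Quotient.sound ⟨-n, by simp [← Perm.mul_apply]⟩

theorem permOrbit_mk_eq_iff_mem_orbit (f : Perm D) (a d : D) :
    Quotient.mk (permOrbit f) d = Quotient.mk (permOrbit f) a ↔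
      d ∈ MulAction.orbit (Subgroup.zpowers f) a := by
  rw [eq_comm, Quotient.eq, MulAction.mem_orbit_iff, Subgroup.exists_zpowers]
  rfl

theorem card_permOrbit_class (f : Perm D) (a : D) :
    Nat.card {d : D // Quotient.mk (permOrbit f) d = Quotient.mk (permOrbit f) a} =
      minimalPeriod f a := by
  rw [Nat.card_congr (subtypeEquivRight (permOrbit_mk_eq_iff_mem_orbit f a)),
    Nat.card_congr (MulAction.orbitZPowersEquiv f a), Nat.card_zmod]
  rfl

theorem apply_apply_apply_of_card_permOrbit_class_eq_three (f : Perm D) (a : D)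
    (h : Nat.card {d : D // Quotient.mk (permOrbit f) d = Quotient.mk (permOrbit f) a} = 3) :
    f (f (f a)) = a := by
  rw [card_permOrbit_class] at h
  simpa [h, iterate_succ_apply'] using iterate_minimalPeriod (f := f) (x := a)

end permOrbit

namespace CombMap

variable {D : Type} (M : CombMap D)

theorem vertexOf_zpow_σ (n : ℤ) (x : D) : M.vertexOf ((M.σ ^ n) x) = M.vertexOf x :=
  permOrbit_mk_zpow_apply M.σ n x

theorem vertexOf_pow_σ (k : ℕ) (x : D) : M.vertexOf ((M.σ ^ k) x) = M.vertexOf x := by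
  simpa using M.vertexOf_zpow_σ k x

theorem vertexOf_σ (x : D) : M.vertexOf (M.σ x) = M.vertexOf x := by
  simpa using M.vertexOf_pow_σ 1 x

theorem θ_facePerm (x : D) : M.θ (M.facePerm x) = M.σ x :=
  M.θ_invol (M.σ x)

theorem facePerm_facePerm_facePerm (htri : M.IsTriangulation) (a : D) :
    M.facePerm (M.facePerm (M.facePerm a)) = a :=
  apply_apply_apply_of_card_permOrbit_class_eq_three M.facePerm a (htri (M.faceOf a))

theorem not_isLoop_of_coloring {C : Type} (c : M.Vertices → C)
    (hc : ∀ d, c (M.vertexOf d) ≠ c (M.vertexOf (M.θ d))) (d : D) : ¬ M.IsLoop d :=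
  fun h => hc d (congrArg c h)

variable {M}

theorem vertexOf_θ_ne (hloop : ∀ d, ¬ M.IsLoop d) {v : M.Vertices} {x : D}
    (hx : M.vertexOf x = v) : M.vertexOf (M.θ x) ≠ v :=
  fun h => hloop x (hx.trans h.symm)

variable (M)

def AvoidingStep (v : M.Vertices) (a b : D) : Prop :=
  M.vertexOf a ≠ v ∧ M.vertexOf b ≠ v ∧ (M.σ a = b ∨ M.θ a = b)

variable {M} {v : M.Vertices}

theorem reflTransGen_avoidingStep_pow_σ {x : D} (hx : M.vertexOf x ≠ v) :
    ∀ k : ℕ, ReflTransGen (M.AvoidingStep v) x ((M.σ ^ k) x)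
  | 0 => .refl
  | k + 1 => (reflTransGen_avoidingStep_pow_σ hx k).tail
    ⟨by rwa [vertexOf_pow_σ], by rwa [vertexOf_pow_σ], Or.inl (by rw [pow_succ', Perm.mul_apply])⟩

theorem reflTransGen_avoidingStep_zpow_σ [Finite D] {x : D} (hx : M.vertexOf x ≠ v) (n : ℤ) :
    ReflTransGen (M.AvoidingStep v) x ((M.σ ^ n) x) := by
  obtain ⟨k, hk⟩ := mem_powers_iff_mem_zpowers.mpr (Subgroup.zpow_mem_zpowers M.σ n)
  rw [← hk]
  exact reflTransGen_avoidingStep_pow_σ hx k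

theorem reflTransGen_avoidingStep_σ_inv [Finite D] {x : D} (hx : M.vertexOf x ≠ v) :
    ReflTransGen (M.AvoidingStep v) x (M.σ⁻¹ x) := by
  simpa using reflTransGen_avoidingStep_zpow_σ hx (-1)

theorem reflTransGen_avoidingStep_θ_θ_σ [Finite D] (hloop : ∀ d, ¬ M.IsLoop d)
    (htri : M.IsTriangulation) {a : D} (ha : M.vertexOf a = v) :
    ReflTransGen (M.AvoidingStep v) (M.θ a) (M.θ (M.σ a)) := by
  set φ := M.facePerm
  have hφφ : φ (φ a) = M.σ⁻¹ (M.θ a) :=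
    (Perm.inv_eq_iff_eq.mpr (by rw [← θ_facePerm, M.facePerm_facePerm_facePerm htri])).symm
  have hθa : M.vertexOf (M.θ a) ≠ v := vertexOf_θ_ne hloop ha
  have hφa : M.vertexOf (φ a) ≠ v := vertexOf_θ_ne hloop ((M.vertexOf_σ a).trans ha)
  have hσφa : M.vertexOf (M.σ (φ a)) ≠ v := by rwa [vertexOf_σ]
  have hφφa : M.vertexOf (φ (φ a)) ≠ v := by
    simpa [hφφ] using (M.vertexOf_zpow_σ (-1) (M.θ a)).trans_ne hθa
  calc ReflTransGen (M.AvoidingStep v) (M.θ a) (φ (φ a)) :=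
        hφφ ▸ reflTransGen_avoidingStep_σ_inv hθa
    ReflTransGen (M.AvoidingStep v) _ (M.σ (φ a)) :=
        .single ⟨hφφa, hσφa, Or.inr (M.θ_facePerm (φ a))⟩
    ReflTransGen (M.AvoidingStep v) _ (φ a) := by
        simpa using reflTransGen_avoidingStep_σ_inv hσφa

open scoped Classical in
variable (M v) in
noncomputable def pushOff (x : D) : D := if M.vertexOf x = v then M.θ x else x

theorem pushOff_of_ne {x : D} (hx : M.vertexOf x ≠ v) : M.pushOff v x = x :=
  if_neg hx

theorem reflTransGen_pushOff_of_step [Finite D] (hloop : ∀ d, ¬ M.IsLoop d)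
    (htri : M.IsTriangulation) {a b : D} (hab : M.σ a = b ∨ M.θ a = b) :
    ReflTransGen (M.AvoidingStep v) (M.pushOff v a) (M.pushOff v b) := by
  by_cases ha : M.vertexOf a = v
  · rcases hab with rfl | rfl
    · have hσa : M.vertexOf (M.σ a) = v := (M.vertexOf_σ a).trans ha
      simpa [pushOff, ha, hσa] using reflTransGen_avoidingStep_θ_θ_σ hloop htri ha
    · simp [pushOff, ha, vertexOf_θ_ne hloop ha, ReflTransGen.refl]
  by_cases hb : M.vertexOf b = v
  · rcases hab with rfl | rfl
    · exact absurd ((M.vertexOf_σ a).symm.trans hb) ha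
    · simp [pushOff, ha, hb, M.θ_invol, ReflTransGen.refl]
  · rw [pushOff_of_ne ha, pushOff_of_ne hb]
    exact .single ⟨ha, hb, hab⟩

variable (M) in
theorem connectedAvoiding_of_isTriangulation [Finite D] (hloop : ∀ d, ¬ M.IsLoop d)
    (hconn : M.IsConnected) (htri : M.IsTriangulation) (v : M.Vertices) :
    M.ConnectedAvoiding v := by
  intro d d' hd hd'
  rw [← pushOff_of_ne hd, ← pushOff_of_ne hd']
  exact (hconn d d').lift' (M.pushOff v) fun a b => reflTransGen_pushOff_of_step hloop htri

end CombMap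

/-- Every lopsp-operation is 2-connected as a map. -/
theorem lopsp_two_connected {D : Type} [Finite D] (O : Lopsp D) :
    O.M.TwoConnected := by
  have hloop := O.M.not_isLoop_of_coloring O.col O.proper
  exact ⟨hloop, O.M.connectedAvoiding_of_isTriangulation hloop O.conn O.tri⟩
end

section
/- Let O be a lopsp-operation with inflation factor k (half the number of triangular faces of O). If k is even, then v_1 does not have colour 1 and the predecoration Q(O) has (k+4)/2 vertices; if k is odd, then v_1 has colour 1 and Q(O) has (k+5)/2 vertices. -/
namespace CombMap

/-- `H` is the submap of `M` induced on the dart set `S`: reversal is inherited, and the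
rotation of `H` is the first-return map of the rotation of `M` to `S`. -/
def IsInducedSubmap {D : Type} (M : CombMap D) (S : Set D) (H : CombMap S) : Prop :=
  (∀ d : S, (H.θ d : D) = M.θ d) ∧
  ∀ d : S, ∃ k : ℕ, 0 < k ∧ ((H.σ d : D) = (⇑M.σ)^[k] d) ∧
    ∀ j, 0 < j → j < k → (⇑M.σ)^[j] (d : D) ∉ S

end CombMap

namespace Lopsp

/-- The darts of the predecoration of a lopsp-operation `O`: the darts of the edges of
colour 1 (i.e. edges joining a colour-0 and a colour-2 vertex), together with — in case
`v₁` has colour 1 — the darts of the colour-2 edge incident with `v₁` (the edge joining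
`v₁` to a colour-0 vertex). -/
def predecoDart {D : Type} (O : Lopsp D) (d : D) : Prop :=
  (O.col (O.M.vertexOf d) ≠ 1 ∧ O.col (O.M.vertexOf (O.M.θ d)) ≠ 1) ∨
  (O.col O.v1 = 1 ∧
    ((O.M.vertexOf d = O.v1 ∧ O.col (O.M.vertexOf (O.M.θ d)) = 0) ∨
     (O.M.vertexOf (O.M.θ d) = O.v1 ∧ O.col (O.M.vertexOf d) = 0)))

end Lopsp

open Function

section Aux
set_option linter.unusedSectionVars false
variable {D : Type} [Finite D] (f : Equiv.Perm D)

lemma permOrbit_mk_eq (x y : D) :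
    (Quotient.mk (permOrbit f) x = Quotient.mk (permOrbit f) y) ↔ f.SameCycle x y := by
  rw [Quotient.eq]; exact Iff.rfl

lemma permOrbit_periodic (x : D) : x ∈ periodicPts f :=
  ⟨orderOf f, orderOf_pos f, by
    show (f ^ orderOf f) x = x
    simp [pow_orderOf_eq_one]⟩

lemma permOrbit_mk_eq_iff_iter (x y : D) :
    (Quotient.mk (permOrbit f) y = Quotient.mk (permOrbit f) x) ↔
      ∃ j < minimalPeriod f x, f^[j] x = y := by
  rw [permOrbit_mk_eq]
  constructor
  · intro h
    obtain ⟨i, _, hi⟩ := (h.symm : f.SameCycle x y).exists_pow_eq'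
    refine ⟨i % minimalPeriod f x, Nat.mod_lt _
      (minimalPeriod_pos_of_mem_periodicPts (permOrbit_periodic f x)), ?_⟩
    rw [iterate_mod_minimalPeriod_eq]
    exact hi
  · rintro ⟨j, _, rfl⟩
    refine ⟨-(j : ℤ), ?_⟩
    rw [zpow_neg, zpow_natCast, show f^[j] x = (f ^ j) x from rfl]
    simp

lemma card_class (x : D) :
    Nat.card {y // Quotient.mk (permOrbit f) y = Quotient.mk (permOrbit f) x} =
      minimalPeriod f x := by
  classical
  have : Fintype D := Fintype.ofFinite D
  set m := minimalPeriod f x with hm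
  have hset : {y | Quotient.mk (permOrbit f) y = Quotient.mk (permOrbit f) x} =
      ↑((Finset.range m).image (fun j => f^[j] x)) := by
    ext y
    simp only [Set.mem_setOf_eq, Finset.coe_image, Set.mem_image, Finset.mem_coe,
      Finset.mem_range]
    exact (permOrbit_mk_eq_iff_iter f x y).trans
      ⟨fun ⟨j, hj, h⟩ => ⟨j, hj, h⟩, fun ⟨j, hj, h⟩ => ⟨j, hj, h⟩⟩
  calc Nat.card {y // Quotient.mk (permOrbit f) y = Quotient.mk (permOrbit f) x}
      = Set.ncard {y | Quotient.mk (permOrbit f) y = Quotient.mk (permOrbit f) x} :=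
        Nat.card_coe_set_eq _
    _ = ((Finset.range m).image (fun j => f^[j] x)).card := by
        rw [hset, Set.ncard_coe_finset]
    _ = m := by
        rw [Finset.card_image_of_injOn, Finset.card_range]
        intro a ha b hb h
        exact iterate_injOn_Iio_minimalPeriod (by simpa using ha) (by simpa using hb) h

/-- If all fibers of `g` have cardinality `c`, then `|A| = c * |B|`. -/
lemma card_eq_mul_of_fibers {A B : Type} [Finite A] [Finite B] (g : A → B) (c : ℕ)
    (h : ∀ b, Nat.card {a // g a = b} = c) : Nat.card A = c * Nat.card B := by
  classical
  have : Fintype A := Fintype.ofFinite A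
  have : Fintype B := Fintype.ofFinite B
  rw [Nat.card_eq_fintype_card, Nat.card_eq_fintype_card,
    ← Fintype.card_congr (Equiv.sigmaFiberEquiv g), Fintype.card_sigma]
  simp only [← Nat.card_eq_fintype_card, h]
  simp [mul_comm]

end Aux
section LopspAux
set_option linter.unusedSectionVars false
open Function
variable {D : Type} [Finite D] (O : Lopsp D)

instance {M : CombMap D} : Finite M.Vertices := Quotient.finite _
instance {M : CombMap D} : Finite M.Edges := Quotient.finite _
instance {M : CombMap D} : Finite M.Faces := Quotient.finite _

lemma vertexOf_sigma (d : D) : O.M.vertexOf (O.M.σ d) = O.M.vertexOf d :=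
  (Quotient.sound (show (permOrbit O.M.σ).r d (O.M.σ d) from ⟨1, by simp⟩)).symm

lemma faceOf_face (d : D) : O.M.faceOf (O.M.facePerm d) = O.M.faceOf d :=
  (Quotient.sound (show (permOrbit O.M.facePerm).r d (O.M.facePerm d) from ⟨1, by simp⟩)).symm

lemma faceOf_iterate (n : ℕ) (d : D) :
    O.M.faceOf ((⇑O.M.facePerm)^[n] d) = O.M.faceOf d := by
  induction n with
  | zero => rfl
  | succ n ih => rw [Function.iterate_succ_apply', faceOf_face, ih]

lemma facePerm_apply (d : D) : O.M.facePerm d = O.M.θ (O.M.σ d) := rfl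

/-- colours change along the face permutation -/
lemma col_facePerm_ne (d : D) :
    O.col (O.M.vertexOf (O.M.facePerm d)) ≠ O.col (O.M.vertexOf d) := by
  have h := O.proper (O.M.σ d)
  rw [vertexOf_sigma] at h
  intro h'
  rw [facePerm_apply] at h'
  exact h h'.symm

/-- the head of `facePerm d` is the tail of `d` -/
lemma head_facePerm (d : D) :
    O.M.vertexOf (O.M.θ (O.M.facePerm d)) = O.M.vertexOf d := by
  rw [facePerm_apply, O.M.θ_invol, vertexOf_sigma]

lemma faceSize_eq (d : D) :
    O.M.faceSize (O.M.faceOf d) = minimalPeriod (⇑O.M.facePerm) d :=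
  card_class O.M.facePerm d

lemma degree_eq (d : D) :
    O.M.degree (O.M.vertexOf d) = minimalPeriod (⇑O.M.σ) d :=
  card_class O.M.σ d

lemma period_three (d : D) : minimalPeriod (⇑O.M.facePerm) d = 3 :=
  (faceSize_eq O d).symm.trans (O.tri _)

lemma facePerm_cube (d : D) : O.M.facePerm (O.M.facePerm (O.M.facePerm d)) = d := by
  have h := iterate_minimalPeriod (f := ⇑O.M.facePerm) (x := d)
  rw [period_three] at h
  simpa [Function.iterate_succ_apply'] using h

lemma theta_period_two (d : D) : minimalPeriod (⇑O.M.θ) d = 2 := by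
  have hper : IsPeriodicPt (⇑O.M.θ) 2 d := by
    show (⇑O.M.θ)^[2] d = d
    simp [Function.iterate_succ_apply', O.M.θ_invol]
  have hdvd := hper.minimalPeriod_dvd
  have hpos : 0 < minimalPeriod (⇑O.M.θ) d :=
    minimalPeriod_pos_of_mem_periodicPts (permOrbit_periodic O.M.θ d)
  have hne1 : minimalPeriod (⇑O.M.θ) d ≠ 1 := by
    intro h
    exact O.M.θ_fixfree d (minimalPeriod_eq_one_iff_isFixedPt.mp h)
  rcases (Nat.dvd_prime Nat.prime_two).mp hdvd with h | h
  · exact absurd h hne1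
  · exact h

lemma card_darts_faces : Nat.card D = 3 * O.M.nF :=
  card_eq_mul_of_fibers O.M.faceOf 3 O.tri

lemma card_darts_edges : Nat.card D = 2 * O.M.nE := by
  refine card_eq_mul_of_fibers O.M.edgeOf 2 ?_
  intro e
  obtain ⟨d, rfl⟩ := Quotient.exists_rep (e : Quotient (permOrbit O.M.θ))
  exact (card_class O.M.θ d).trans (theta_period_two O d)

end LopspAux
section LopspAux2
set_option linter.unusedSectionVars false
open Function
variable {D : Type} [Finite D] (O : Lopsp D)

/-- The three colours around a face: setup lemma. -/
lemma face_colours (d : D) :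
    O.col (O.M.vertexOf (O.M.facePerm d)) ≠ O.col (O.M.vertexOf d) ∧
    O.col (O.M.vertexOf (O.M.facePerm (O.M.facePerm d))) ≠
      O.col (O.M.vertexOf (O.M.facePerm d)) ∧
    O.col (O.M.vertexOf d) ≠ O.col (O.M.vertexOf (O.M.facePerm (O.M.facePerm d))) := by
  refine ⟨col_facePerm_ne O d, col_facePerm_ne O _, ?_⟩
  have h := col_facePerm_ne O (O.M.facePerm (O.M.facePerm d))
  rw [facePerm_cube] at h
  exact h

/-- the colour of the head of `d` is the colour of the tail of `facePerm² d`. -/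
lemma head_col (d : D) :
    O.M.vertexOf (O.M.θ d) = O.M.vertexOf (O.M.facePerm (O.M.facePerm d)) := by
  conv_lhs => rw [← facePerm_cube O d]
  rw [head_facePerm]

/-- Every vertex of colour ≠ 1 is the tail of a predecoration dart. -/
lemma exists_dart_of_col_ne_one (v : O.M.Vertices) (hv : O.col v ≠ 1) :
    ∃ d, O.predecoDart d ∧ O.M.vertexOf d = v := by
  obtain ⟨d, hd⟩ := Quotient.exists_rep (v : Quotient (permOrbit O.M.σ))
  have hd' : O.M.vertexOf d = v := hd
  obtain ⟨h1, h2, h3⟩ := face_colours O d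
  by_cases hc : O.col (O.M.vertexOf (O.M.facePerm (O.M.facePerm d))) = 1
  · -- use σ d : head colour is that of facePerm d, which is ≠ 1
    refine ⟨O.M.σ d, Or.inl ⟨?_, ?_⟩, by rwa [vertexOf_sigma]⟩
    · rw [vertexOf_sigma, hd']; exact hv
    · rw [show O.M.θ (O.M.σ d) = O.M.facePerm d from rfl]
      intro hb
      exact h2 (hb.trans hc.symm).symm
  · -- use d itself
    refine ⟨d, Or.inl ⟨?_, ?_⟩, hd'⟩
    · rw [hd']; exact hv
    · rw [head_col]; exact hc

/-- If `v₁` has colour 1, it is the tail of a predecoration dart. -/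
lemma exists_dart_v1 (h1 : O.col O.v1 = 1) :
    ∃ d, O.predecoDart d ∧ O.M.vertexOf d = O.v1 := by
  obtain ⟨d, hd⟩ := Quotient.exists_rep (O.v1 : Quotient (permOrbit O.M.σ))
  have hd' : O.M.vertexOf d = O.v1 := hd
  obtain ⟨h2, h3, h4⟩ := face_colours O d
  have ha : O.col (O.M.vertexOf d) = 1 := by rw [hd']; exact h1
  have hbc : O.col (O.M.vertexOf (O.M.facePerm d)) = 0 ∨
      O.col (O.M.vertexOf (O.M.facePerm (O.M.facePerm d))) = 0 := by
    set a := O.col (O.M.vertexOf d)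
    set b := O.col (O.M.vertexOf (O.M.facePerm d))
    set c := O.col (O.M.vertexOf (O.M.facePerm (O.M.facePerm d)))
    clear_value a b c
    revert h2 h3 h4 ha
    revert a b c
    decide
  rcases hbc with hb | hc
  · -- use σ d : tail v1, head colour 0
    refine ⟨O.M.σ d, Or.inr ⟨h1, Or.inl ⟨by rwa [vertexOf_sigma], ?_⟩⟩, by rwa [vertexOf_sigma]⟩
    rw [show O.M.θ (O.M.σ d) = O.M.facePerm d from rfl]
    exact hb
  · -- use d : tail v1, head colour 0
    refine ⟨d, Or.inr ⟨h1, Or.inl ⟨hd', ?_⟩⟩, hd'⟩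
    rw [head_col]; exact hc

/-- Each face contains exactly one dart whose tail has colour 1:
`|{d : col(tail d) = 1}| = nF`. -/
lemma card_col1_darts : Nat.card {d : D // O.col (O.M.vertexOf d) = 1} = O.M.nF := by
  have h := card_eq_mul_of_fibers
    (fun x : {d : D // O.col (O.M.vertexOf d) = 1} => O.M.faceOf x.val) 1 ?_
  · rw [h, one_mul]; rfl
  intro f
  obtain ⟨d, rfl⟩ := Quotient.exists_rep (f : Quotient (permOrbit O.M.facePerm))
  obtain ⟨h1, h2, h3⟩ := face_colours O d
  -- colours of the three iterates, as a function
  have hcols : ∀ i < 3, ∀ j < 3,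
      O.col (O.M.vertexOf ((⇑O.M.facePerm)^[i] d)) =
        O.col (O.M.vertexOf ((⇑O.M.facePerm)^[j] d)) → i = j := by
    have e1 : (⇑O.M.facePerm)^[1] d = O.M.facePerm d := rfl
    have e2 : (⇑O.M.facePerm)^[2] d = O.M.facePerm (O.M.facePerm d) := by
      rw [Function.iterate_succ_apply', e1]
    intro i hi j hj hij
    interval_cases i <;> interval_cases j <;>
      simp_all [e1, e2]
  -- existence
  have hex : ∃ x : {d : D // O.col (O.M.vertexOf d) = 1},
      O.M.faceOf x.val = O.M.faceOf d := by
    have : O.col (O.M.vertexOf d) = 1 ∨ O.col (O.M.vertexOf (O.M.facePerm d)) = 1 ∨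
        O.col (O.M.vertexOf (O.M.facePerm (O.M.facePerm d))) = 1 := by
      set a := O.col (O.M.vertexOf d)
      set b := O.col (O.M.vertexOf (O.M.facePerm d))
      set c := O.col (O.M.vertexOf (O.M.facePerm (O.M.facePerm d)))
      clear_value a b c
      revert h1 h2 h3; revert a b c; decide
    rcases this with h | h | h
    · exact ⟨⟨d, h⟩, rfl⟩
    · exact ⟨⟨O.M.facePerm d, h⟩, faceOf_face O d⟩
    · exact ⟨⟨O.M.facePerm (O.M.facePerm d), h⟩, by
        show O.M.faceOf (O.M.facePerm (O.M.facePerm d)) = O.M.faceOf d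
        rw [faceOf_face, faceOf_face]⟩
  rw [Nat.card_eq_one_iff_unique]
  obtain ⟨x, hx⟩ := hex
  refine ⟨⟨fun a b => ?_⟩, ⟨⟨x, hx⟩⟩⟩
  -- uniqueness
  obtain ⟨⟨y, hy⟩, hyf⟩ := a
  obtain ⟨⟨z, hz⟩, hzf⟩ := b
  have hy3 := (permOrbit_mk_eq_iff_iter O.M.facePerm d y).mp hyf
  have hz3 := (permOrbit_mk_eq_iff_iter O.M.facePerm d z).mp hzf
  rw [period_three] at hy3 hz3
  obtain ⟨i, hi, rfl⟩ := hy3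
  obtain ⟨j, hj, rfl⟩ := hz3
  have := hcols i hi j hj (hy.trans hz.symm)
  subst this
  rfl

end LopspAux2
section LopspCount
set_option linter.unusedSectionVars false
open Function
variable {D : Type} [Finite D] (O : Lopsp D)

lemma nV_split :
    O.M.nV = Nat.card {v : O.M.Vertices // O.col v = 1} +
      Nat.card {v : O.M.Vertices // O.col v ≠ 1} := by
  classical
  rw [show O.M.nV = Nat.card O.M.Vertices from rfl,
    ← Nat.card_congr (Equiv.sumCompl (fun v : O.M.Vertices => O.col v = 1)), Nat.card_sum]

/-- Case `col v₁ ≠ 1`: number of colour-1-tailed darts is `4·n₁`. -/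
lemma count_col1_darts_A (h1 : O.col O.v1 ≠ 1) :
    Nat.card {d : D // O.col (O.M.vertexOf d) = 1} =
      4 * Nat.card {v : O.M.Vertices // O.col v = 1} := by
  refine card_eq_mul_of_fibers
    (fun x : {d : D // O.col (O.M.vertexOf d) = 1} =>
      (⟨O.M.vertexOf x.val, x.2⟩ : {v : O.M.Vertices // O.col v = 1})) 4 ?_
  rintro ⟨v, hv⟩
  have e : {x : {d : D // O.col (O.M.vertexOf d) = 1} //
      (⟨O.M.vertexOf x.val, x.2⟩ : {v : O.M.Vertices // O.col v = 1}) = ⟨v, hv⟩} ≃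
      {d : D // O.M.vertexOf d = v} :=
    { toFun := fun x => ⟨x.val.val, congrArg Subtype.val x.2⟩
      invFun := fun d => ⟨⟨d.val, by rw [d.2]; exact hv⟩, Subtype.ext d.2⟩
      left_inv := fun x => by ext; rfl
      right_inv := fun d => rfl }
  rw [Nat.card_congr e]
  have : v ≠ O.v1 := fun h => h1 (h ▸ hv)
  exact O.hdeg v hv this

/-- Case `col v₁ = 1`: number of colour-1-tailed darts is `2 + 4·(n₁-1)`. -/
lemma count_col1_darts_B (h1 : O.col O.v1 = 1) :
    Nat.card {d : D // O.col (O.M.vertexOf d) = 1} =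
      2 + 4 * Nat.card {v : O.M.Vertices // O.col v = 1 ∧ v ≠ O.v1} := by
  classical
  have hsplit : Nat.card {d : D // O.col (O.M.vertexOf d) = 1} =
      Nat.card {x : {d : D // O.col (O.M.vertexOf d) = 1} // O.M.vertexOf x.val = O.v1} +
      Nat.card {x : {d : D // O.col (O.M.vertexOf d) = 1} // ¬ O.M.vertexOf x.val = O.v1} := by
    rw [← Nat.card_congr (Equiv.sumCompl
      (fun x : {d : D // O.col (O.M.vertexOf d) = 1} => O.M.vertexOf x.val = O.v1)),
      Nat.card_sum]
  have e1 : {x : {d : D // O.col (O.M.vertexOf d) = 1} // O.M.vertexOf x.val = O.v1} ≃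
      {d : D // O.M.vertexOf d = O.v1} :=
    { toFun := fun x => ⟨x.val.val, x.2⟩
      invFun := fun d => ⟨⟨d.val, by rw [d.2]; exact h1⟩, d.2⟩
      left_inv := fun x => by ext; rfl
      right_inv := fun d => rfl }
  have h2 : Nat.card {x : {d : D // O.col (O.M.vertexOf d) = 1} //
      O.M.vertexOf x.val = O.v1} = 2 := by
    rw [Nat.card_congr e1]
    exact O.hv1 h1
  have h4 : Nat.card {x : {d : D // O.col (O.M.vertexOf d) = 1} //
      ¬ O.M.vertexOf x.val = O.v1} =
      4 * Nat.card {v : O.M.Vertices // O.col v = 1 ∧ v ≠ O.v1} := by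
    refine card_eq_mul_of_fibers
      (fun x : {x : {d : D // O.col (O.M.vertexOf d) = 1} // ¬ O.M.vertexOf x.val = O.v1} =>
        (⟨O.M.vertexOf x.val.val, x.val.2, x.2⟩ :
          {v : O.M.Vertices // O.col v = 1 ∧ v ≠ O.v1})) 4 ?_
    rintro ⟨v, hv, hvne⟩
    have e : {x : {x : {d : D // O.col (O.M.vertexOf d) = 1} // ¬ O.M.vertexOf x.val = O.v1} //
        (⟨O.M.vertexOf x.val.val, x.val.2, x.2⟩ :
          {v : O.M.Vertices // O.col v = 1 ∧ v ≠ O.v1}) = ⟨v, hv, hvne⟩} ≃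
        {d : D // O.M.vertexOf d = v} :=
      { toFun := fun x => ⟨x.val.val.val, congrArg Subtype.val x.2⟩
        invFun := fun d => ⟨⟨⟨d.val, by rw [d.2]; exact hv⟩, by
          show ¬ O.M.vertexOf d.val = O.v1
          rw [d.2]; exact hvne⟩, Subtype.ext d.2⟩
        left_inv := fun x => by ext; rfl
        right_inv := fun d => rfl }
    rw [Nat.card_congr e]
    exact O.hdeg v hv hvne
  rw [hsplit, h2, h4]

lemma n1_split (h1 : O.col O.v1 = 1) :
    Nat.card {v : O.M.Vertices // O.col v = 1} =
      Nat.card {v : O.M.Vertices // O.col v = 1 ∧ v ≠ O.v1} + 1 := by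
  classical
  have hsplit : Nat.card {v : O.M.Vertices // O.col v = 1} =
      Nat.card {x : {v : O.M.Vertices // O.col v = 1} // x.val = O.v1} +
      Nat.card {x : {v : O.M.Vertices // O.col v = 1} // ¬ x.val = O.v1} := by
    rw [← Nat.card_congr (Equiv.sumCompl
      (fun x : {v : O.M.Vertices // O.col v = 1} => x.val = O.v1)), Nat.card_sum]
  have hone : Nat.card {x : {v : O.M.Vertices // O.col v = 1} // x.val = O.v1} = 1 := by
    rw [Nat.card_eq_one_iff_unique]
    refine ⟨⟨fun a b => ?_⟩, ⟨⟨⟨O.v1, h1⟩, rfl⟩⟩⟩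
    ext
    rw [a.2, b.2]
  have he : {x : {v : O.M.Vertices // O.col v = 1} // ¬ x.val = O.v1} ≃
      {v : O.M.Vertices // O.col v = 1 ∧ v ≠ O.v1} :=
    { toFun := fun x => ⟨x.val.val, x.val.2, x.2⟩
      invFun := fun v => ⟨⟨v.val, v.2.1⟩, v.2.2⟩
      left_inv := fun x => by ext; rfl
      right_inv := fun v => rfl }
  rw [hsplit, hone, Nat.card_congr he]
  omega

end LopspCount
section Submap
set_option linter.unusedSectionVars false
open Function
variable {D : Type} [Finite D] (O : Lopsp D)

lemma vertexOf_iterate (n : ℕ) (d : D) :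
    O.M.vertexOf ((⇑O.M.σ)^[n] d) = O.M.vertexOf d := by
  induction n with
  | zero => rfl
  | succ n ih => rw [Function.iterate_succ_apply', vertexOf_sigma, ih]

variable (H : CombMap {d : D // O.predecoDart d})
  (hH : O.M.IsInducedSubmap {d : D | O.predecoDart d} H)
include hH

lemma step_vertex (x : {d : D // O.predecoDart d}) :
    O.M.vertexOf ((H.σ x : {d : D // O.predecoDart d}) : D) = O.M.vertexOf (x : D) := by
  obtain ⟨kk, _, hσ, _⟩ := hH.2 x
  rw [show ((H.σ x : {d : D // O.predecoDart d}) : D) = (⇑O.M.σ)^[kk] (x : D) from hσ,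
    vertexOf_iterate]

lemma pow_vertex (n : ℕ) (x : {d : D // O.predecoDart d}) :
    O.M.vertexOf (((H.σ ^ n) x : {d : D // O.predecoDart d}) : D) = O.M.vertexOf (x : D) := by
  induction n generalizing x with
  | zero => rfl
  | succ n ih =>
    rw [pow_succ, Equiv.Perm.mul_apply]
    rw [ih (H.σ x), step_vertex O H hH]

lemma orbit_vertex (x y : {d : D // O.predecoDart d}) (h : (permOrbit H.σ).r x y) :
    O.M.vertexOf (x : D) = O.M.vertexOf (y : D) := by
  obtain ⟨n, rfl⟩ := h
  obtain ⟨m, rfl | rfl⟩ := n.eq_nat_or_neg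
  · rw [zpow_natCast, pow_vertex O H hH]
  · have : (H.σ ^ m) ((H.σ ^ (-(m:ℤ))) x) = x := by
      rw [← zpow_natCast H.σ m, ← Equiv.Perm.mul_apply, ← zpow_add]
      simp
    conv_lhs => rw [← this]
    rw [pow_vertex O H hH]

lemma reach : ∀ m : ℕ, ∀ x : {d : D // O.predecoDart d},
    O.predecoDart ((⇑O.M.σ)^[m] (x : D)) →
    ∃ j : ℕ, (((H.σ ^ j) x : {d : D // O.predecoDart d}) : D) = (⇑O.M.σ)^[m] (x : D) := by
  intro m
  induction m using Nat.strong_induction_on with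
  | _ m ih =>
    intro x hm
    rcases Nat.eq_zero_or_pos m with rfl | hmpos
    · exact ⟨0, rfl⟩
    obtain ⟨kk, hkpos, hσ, hmin⟩ := hH.2 x
    have hkm : kk ≤ m := by
      by_contra hlt
      exact hmin m hmpos (lt_of_not_ge hlt) hm
    have heq : (⇑O.M.σ)^[m] (x : D) = (⇑O.M.σ)^[m - kk] ((H.σ x : {d : D // O.predecoDart d}) : D) := by
      rw [show ((H.σ x : {d : D // O.predecoDart d}) : D) = (⇑O.M.σ)^[kk] (x : D) from hσ,
        ← Function.iterate_add_apply]
      congr 1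
      omega
    have hm' : O.predecoDart ((⇑O.M.σ)^[m - kk] ((H.σ x : {d : D // O.predecoDart d}) : D)) := by
      rw [← heq]; exact hm
    obtain ⟨j, hj⟩ := ih (m - kk) (by omega) (H.σ x) hm'
    refine ⟨j + 1, ?_⟩
    rw [pow_succ, Equiv.Perm.mul_apply, hj, ← heq]

lemma card_H_vertices :
    Nat.card H.Vertices =
      Nat.card {v : O.M.Vertices // ∃ d, O.predecoDart d ∧ O.M.vertexOf d = v} := by
  refine Nat.card_congr (Equiv.ofBijective
    (Quotient.lift (fun x : {d : D // O.predecoDart d} =>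
      (⟨O.M.vertexOf (x : D), x.val, x.2, rfl⟩ :
        {v : O.M.Vertices // ∃ d, O.predecoDart d ∧ O.M.vertexOf d = v}))
      (fun x y h => Subtype.ext (orbit_vertex O H hH x y h))) ⟨?_, ?_⟩)
  · intro a b
    obtain ⟨x, rfl⟩ := Quotient.exists_rep (a : Quotient (permOrbit H.σ))
    obtain ⟨y, rfl⟩ := Quotient.exists_rep (b : Quotient (permOrbit H.σ))
    intro hab
    have hv : O.M.vertexOf (x : D) = O.M.vertexOf (y : D) := congrArg Subtype.val hab
    have hsc : O.M.σ.SameCycle (x : D) (y : D) := (permOrbit_mk_eq O.M.σ _ _).mp hv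
    obtain ⟨i, _, hi⟩ := hsc.exists_pow_eq'
    have hmem : O.predecoDart ((⇑O.M.σ)^[i] (x : D)) := by
      rw [show (⇑O.M.σ)^[i] (x : D) = (O.M.σ ^ i) (x : D) from rfl, hi]
      exact y.2
    obtain ⟨j, hj⟩ := reach O H hH i x hmem
    refine Quotient.sound ⟨(j : ℤ), ?_⟩
    rw [zpow_natCast]
    refine Subtype.ext ?_
    rw [hj]
    rw [show (⇑O.M.σ)^[i] (x : D) = (O.M.σ ^ i) (x : D) from rfl, hi]
  · rintro ⟨v, d, hd, rfl⟩
    exact ⟨Quotient.mk _ ⟨d, hd⟩, rfl⟩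

end Submap
section Final
set_option linter.unusedSectionVars false
open Function
variable {D : Type} [Finite D] (O : Lopsp D)

lemma tail_predecoDart (d : D) (hd : O.predecoDart d) :
    O.col (O.M.vertexOf d) ≠ 1 ∨ (O.col O.v1 = 1 ∧ O.M.vertexOf d = O.v1) := by
  rcases hd with ⟨ha, _⟩ | ⟨hc1, ⟨he, _⟩ | ⟨_, h0⟩⟩
  · exact Or.inl ha
  · exact Or.inr ⟨hc1, he⟩
  · refine Or.inl ?_
    rw [h0]
    decide

lemma card_T_A (h1 : O.col O.v1 ≠ 1) :
    Nat.card {v : O.M.Vertices // ∃ d, O.predecoDart d ∧ O.M.vertexOf d = v} =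
      Nat.card {v : O.M.Vertices // O.col v ≠ 1} := by
  refine Nat.card_congr (Equiv.subtypeEquivRight fun v => ⟨?_, ?_⟩)
  · rintro ⟨d, hd, rfl⟩
    rcases tail_predecoDart O d hd with h | ⟨hc, _⟩
    · exact h
    · exact absurd hc h1
  · exact exists_dart_of_col_ne_one O v

lemma card_T_B (h1 : O.col O.v1 = 1) :
    Nat.card {v : O.M.Vertices // ∃ d, O.predecoDart d ∧ O.M.vertexOf d = v} =
      Nat.card {v : O.M.Vertices // O.col v ≠ 1} + 1 := by
  classical
  have hsplit : Nat.card {v : O.M.Vertices // ∃ d, O.predecoDart d ∧ O.M.vertexOf d = v} =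
      Nat.card {x : {v : O.M.Vertices // ∃ d, O.predecoDart d ∧ O.M.vertexOf d = v} //
        O.col x.val ≠ 1} +
      Nat.card {x : {v : O.M.Vertices // ∃ d, O.predecoDart d ∧ O.M.vertexOf d = v} //
        ¬ O.col x.val ≠ 1} := by
    rw [← Nat.card_congr (Equiv.sumCompl
      (fun x : {v : O.M.Vertices // ∃ d, O.predecoDart d ∧ O.M.vertexOf d = v} =>
        O.col x.val ≠ 1)), Nat.card_sum]
  have he : {x : {v : O.M.Vertices // ∃ d, O.predecoDart d ∧ O.M.vertexOf d = v} //
      O.col x.val ≠ 1} ≃ {v : O.M.Vertices // O.col v ≠ 1} :=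
    { toFun := fun x => ⟨x.val.val, x.2⟩
      invFun := fun v => ⟨⟨v.val, exists_dart_of_col_ne_one O v.val v.2⟩, v.2⟩
      left_inv := fun x => by ext; rfl
      right_inv := fun v => rfl }
  have hone : Nat.card {x : {v : O.M.Vertices // ∃ d, O.predecoDart d ∧ O.M.vertexOf d = v} //
      ¬ O.col x.val ≠ 1} = 1 := by
    rw [Nat.card_eq_one_iff_unique]
    have key : ∀ x : {v : O.M.Vertices // ∃ d, O.predecoDart d ∧ O.M.vertexOf d = v},
        ¬ O.col x.val ≠ 1 → x.val = O.v1 := by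
      rintro ⟨v, d, hd, rfl⟩ hx
      rcases tail_predecoDart O d hd with h | ⟨_, he'⟩
      · exact absurd h hx
      · exact he'
    refine ⟨⟨fun a b => ?_⟩, ⟨⟨⟨O.v1, exists_dart_v1 O h1⟩, not_not.mpr h1⟩⟩⟩
    ext
    rw [key a.val a.2, key b.val b.2]
  rw [hsplit, hone, Nat.card_congr he]

lemma main_case_B (k : ℕ) (hk : O.M.nF = 2 * k)
    (H : CombMap {d : D // O.predecoDart d})
    (hH : O.M.IsInducedSubmap {d : D | O.predecoDart d} H)
    (h1 : O.col O.v1 = 1) : Odd k ∧ 2 * H.nV = k + 5 := by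
  have hD3 := card_darts_faces O
  have hD2 := card_darts_edges O
  have heuler : O.M.nV + O.M.nF = O.M.nE + 2 := O.euler
  have hcount := (card_col1_darts O).trans hk
  have hB := count_col1_darts_B O h1
  have hn1 := n1_split O h1
  have hnV := nV_split O
  have hT := card_T_B O h1
  have hHV := card_H_vertices O H hH
  constructor
  · refine ⟨Nat.card {v : O.M.Vertices // O.col v = 1 ∧ v ≠ O.v1}, by omega⟩
  · show 2 * Nat.card H.Vertices = k + 5
    omega

lemma main_case_A (k : ℕ) (hk : O.M.nF = 2 * k)
    (H : CombMap {d : D // O.predecoDart d})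
    (hH : O.M.IsInducedSubmap {d : D | O.predecoDart d} H)
    (h1 : O.col O.v1 ≠ 1) : Even k ∧ 2 * H.nV = k + 4 := by
  have hD3 := card_darts_faces O
  have hD2 := card_darts_edges O
  have heuler : O.M.nV + O.M.nF = O.M.nE + 2 := O.euler
  have hcount := (card_col1_darts O).trans hk
  have hA := count_col1_darts_A O h1
  have hnV := nV_split O
  have hT := card_T_A O h1
  have hHV := card_H_vertices O H hH
  constructor
  · exact ⟨Nat.card {v : O.M.Vertices // O.col v = 1}, by omega⟩
  · show 2 * Nat.card H.Vertices = k + 4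
    omega

end Final
/-- Let `O` be a lopsp-operation with inflation factor `k` (half the
number of triangular faces of `O`), and let `Q(O)` be its predecoration. If `k` is even
then `v₁` does not have colour 1 and `Q(O)` has `(k+4)/2` vertices; if `k` is odd then
`v₁` has colour 1 and `Q(O)` has `(k+5)/2` vertices. -/
theorem predecoration_size {D : Type} [Finite D] (O : Lopsp D) (k : ℕ)
    (hk : O.M.nF = 2 * k)
    (H : CombMap {d : D // O.predecoDart d})
    (hH : O.M.IsInducedSubmap {d : D | O.predecoDart d} H) :
    (Even k → O.col O.v1 ≠ 1 ∧ 2 * H.nV = k + 4) ∧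
    (Odd k → O.col O.v1 = 1 ∧ 2 * H.nV = k + 5) := by
  constructor
  · intro hev
    by_cases h1 : O.col O.v1 = 1
    · exact absurd (main_case_B O k hk H hH h1).1 (Nat.not_odd_iff_even.mpr hev)
    · exact ⟨h1, (main_case_A O k hk H hH h1).2⟩
  · intro hodd
    by_cases h1 : O.col O.v1 = 1
    · exact ⟨h1, (main_case_B O k hk H hH h1).2⟩
    · exact absurd (main_case_A O k hk H hH h1).1 (Nat.not_even_iff_odd.mpr hodd)
end
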